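/- For R ≥ 0 and a probability distribution p_K on a finite set X, define F(R|p_K) = min over all distributions P on X of ( max{H(P) − R, 0} + D(P‖p_K) ). Then F(R|p_K) > 0 if and only if R < H(p_K). -/

import Mathlib

/-!
If `R ≥ H(p_K)`, the choice `P = p_K` makes both terms vanish. If `R < H(p_K)`, the objective is
positive at every point of the simplex: at `p_K` the entropy term is positive, elsewhere the
divergence is (Gibbs' inequality). Being continuous on the compact simplex, the objective attains
its infimum, which is therefore positive.
-/

/-- Base-2 Shannon entropy of a distribution on a finite set. -/
noncomputable def ent {𝒳 : Type*} [Fintype 𝒳] (P : 𝒳 → ℝ) : ℝ :=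
  -∑ x, P x * Real.logb 2 (P x)

/-- Base-2 relative entropy (Kullback–Leibler divergence). -/
noncomputable def KL {𝒳 : Type*} [Fintype 𝒳] (P Q : 𝒳 → ℝ) : ℝ :=
  ∑ x, P x * Real.logb 2 (P x / Q x)

open Real InformationTheory

lemma mul_log_div_eq_mul_klFun_add {p q : ℝ} (hq : q ≠ 0) :
    p * log (p / q) = q * klFun (p / q) + (p - q) := by
  rw [klFun_apply]
  field_simp
  ring

lemma continuous_mul_log_div_const (c : ℝ) : Continuous fun x : ℝ ↦ x * log (x / c) := by
  rcases eq_or_ne c 0 with rfl | hc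
  · simpa using continuous_const
  · have h : (fun x : ℝ ↦ x * log (x / c)) = fun x ↦ x * log x - x * log c := by
      funext x
      rcases eq_or_ne x 0 with rfl | hx
      · simp
      · rw [log_div hx hc, mul_sub]
    rw [h]
    exact continuous_mul_log.sub (continuous_mul_const _)

lemma mul_klFun_div_nonneg {p q : ℝ} (hp : 0 ≤ p) (hq : 0 < q) : 0 ≤ q * klFun (p / q) :=
  mul_nonneg hq.le (klFun_nonneg (div_nonneg hp hq.le))

section Divergence

variable {𝒳 : Type*} [Fintype 𝒳]

lemma ent_eq_sum_negMulLog (P : 𝒳 → ℝ) : ent P = (∑ x, negMulLog (P x)) / log 2 := by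
  simp only [ent, negMulLog, logb, Finset.sum_div, ← Finset.sum_neg_distrib]
  congr 1
  funext x
  ring

lemma KL_eq_sum_mul_log_div (P Q : 𝒳 → ℝ) :
    KL P Q = (∑ x, P x * log (P x / Q x)) / log 2 := by
  simp only [KL, logb, Finset.sum_div, mul_div_assoc]

lemma continuous_ent : Continuous (ent : (𝒳 → ℝ) → ℝ) := by
  simp_rw [funext ent_eq_sum_negMulLog]
  fun_prop

lemma continuous_KL_left (Q : 𝒳 → ℝ) : Continuous fun P ↦ KL P Q := by
  simp_rw [KL_eq_sum_mul_log_div]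
  exact (continuous_finsetSum _ fun x _ ↦
    (continuous_mul_log_div_const (Q x)).comp (continuous_apply x)).div_const _

@[simp]
lemma KL_self (Q : 𝒳 → ℝ) : KL Q Q = 0 := by
  refine Finset.sum_eq_zero fun x _ ↦ ?_
  rcases eq_or_ne (Q x) 0 with h | h <;> simp [h]

/-- `D(P‖Q)` as the `klFun`-divergence; the affine correction `∑ (P - Q)` vanishes because the
masses agree. -/
lemma KL_eq_sum_mul_klFun {P Q : 𝒳 → ℝ} (hQ : ∀ x, Q x ≠ 0) (hsum : ∑ x, P x = ∑ x, Q x) :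
    KL P Q = (∑ x, Q x * klFun (P x / Q x)) / log 2 := by
  rw [KL_eq_sum_mul_log_div]
  simp only [mul_log_div_eq_mul_klFun_add (hQ _), Finset.sum_add_distrib, Finset.sum_sub_distrib,
    hsum, sub_self, add_zero]

variable {P Q : 𝒳 → ℝ}

lemma KL_nonneg (hP : ∀ x, 0 ≤ P x) (hQ : ∀ x, 0 < Q x) (hsum : ∑ x, P x = ∑ x, Q x) :
    0 ≤ KL P Q := by
  rw [KL_eq_sum_mul_klFun (fun x ↦ (hQ x).ne') hsum]
  have := log_pos one_lt_two
  have := Finset.sum_nonneg fun x (_ : x ∈ Finset.univ) ↦ mul_klFun_div_nonneg (hP x) (hQ x)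
  positivity

lemma KL_pos_of_ne (hP : ∀ x, 0 ≤ P x) (hQ : ∀ x, 0 < Q x) (hsum : ∑ x, P x = ∑ x, Q x)
    (hne : P ≠ Q) : 0 < KL P Q := by
  obtain ⟨x₀, hx₀⟩ := Function.ne_iff.1 hne
  have hterm : 0 < Q x₀ * klFun (P x₀ / Q x₀) := by
    refine (mul_klFun_div_nonneg (hP x₀) (hQ x₀)).lt_of_ne' fun h ↦ hx₀ ?_
    rw [mul_eq_zero, klFun_eq_zero_iff (div_nonneg (hP x₀) (hQ x₀).le),
      div_eq_one_iff_eq (hQ x₀).ne'] at h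
    exact h.resolve_left (hQ x₀).ne'
  rw [KL_eq_sum_mul_klFun (fun x ↦ (hQ x).ne') hsum]
  exact div_pos (Finset.sum_pos' (fun x _ ↦ mul_klFun_div_nonneg (hP x) (hQ x))
    ⟨x₀, Finset.mem_univ _, hterm⟩) (log_pos one_lt_two)

end Divergence

section Objective

variable {𝒳 : Type*} [Fintype 𝒳]

/-- The objective `[H(P) − R]⁺ + D(P‖Q)` minimised in `F(R|Q)`. -/
noncomputable def excessEntropyAddKL (R : ℝ) (Q P : 𝒳 → ℝ) : ℝ :=
  max (ent P - R) 0 + KL P Q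

lemma continuous_excessEntropyAddKL (R : ℝ) (Q : 𝒳 → ℝ) :
    Continuous (excessEntropyAddKL R Q) :=
  ((continuous_ent.sub continuous_const).max continuous_const).add (continuous_KL_left Q)

variable {R : ℝ} {P Q : 𝒳 → ℝ}

lemma excessEntropyAddKL_self_of_ent_le (h : ent Q ≤ R) : excessEntropyAddKL R Q Q = 0 := by
  simp [excessEntropyAddKL, h]

lemma excessEntropyAddKL_nonneg (hQ : ∀ x, 0 < Q x) (hQs : ∑ x, Q x = 1)
    (hP : P ∈ stdSimplex ℝ 𝒳) : 0 ≤ excessEntropyAddKL R Q P :=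
  add_nonneg (le_max_right _ _) (KL_nonneg hP.1 hQ (hP.2.trans hQs.symm))

lemma excessEntropyAddKL_pos (hQ : ∀ x, 0 < Q x) (hQs : ∑ x, Q x = 1) (hR : R < ent Q)
    (hP : P ∈ stdSimplex ℝ 𝒳) : 0 < excessEntropyAddKL R Q P := by
  rcases eq_or_ne P Q with rfl | hne
  · simpa [excessEntropyAddKL] using hR
  · exact add_pos_of_nonneg_of_pos (le_max_right _ _)
      (KL_pos_of_ne hP.1 hQ (hP.2.trans hQs.symm) hne)

end Objective

theorem stmt_11 {𝒳 : Type*} [Fintype 𝒳]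
    (pK : 𝒳 → ℝ) (hpos : ∀ x, 0 < pK x) (h1 : ∑ x, pK x = 1)
    (R : ℝ) :
    0 < sInf {d : ℝ | ∃ P : 𝒳 → ℝ,
        (∀ x, 0 ≤ P x) ∧ ∑ x, P x = 1 ∧ d = max (ent P - R) 0 + KL P pK}
      ↔ R < ent pK := by
  have hS : {d : ℝ | ∃ P : 𝒳 → ℝ,
      (∀ x, 0 ≤ P x) ∧ ∑ x, P x = 1 ∧ d = max (ent P - R) 0 + KL P pK} =
      excessEntropyAddKL R pK '' stdSimplex ℝ 𝒳 := by
    ext d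
    simp [stdSimplex, excessEntropyAddKL, eq_comm, and_assoc]
  have hpK : pK ∈ stdSimplex ℝ 𝒳 := ⟨fun x ↦ (hpos x).le, h1⟩
  rw [hS]
  constructor
  · intro hF
    by_contra! hle
    have hbdd : BddBelow (excessEntropyAddKL R pK '' stdSimplex ℝ 𝒳) :=
      ⟨0, Set.forall_mem_image.2 fun P hP ↦ excessEntropyAddKL_nonneg hpos h1 hP⟩
    have := csInf_le hbdd (Set.mem_image_of_mem _ hpK)
    rw [excessEntropyAddKL_self_of_ent_le hle] at this
    linarith
  · intro hR
    obtain ⟨P, hP, hmin⟩ := ((isCompact_stdSimplex ℝ 𝒳).image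
      (continuous_excessEntropyAddKL R pK)).sInf_mem ⟨_, Set.mem_image_of_mem _ hpK⟩
    exact hmin ▸ excessEntropyAddKL_pos hpos h1 hR hP
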